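/- Key identity for the BI model: let the true p-values be i.i.d. uniform(0,1), independent of the false p-values, with N = n₀ true hypotheses, and consider the step-up test with deterministic critical values 0 < α_{1:n} ≤ … ≤ α_{n:n} < 1. Set γ(i) = n·α_{i:n} for i ≥ 1 and γ(0) = n·α_{1:n}. Then E(V/γ(R)) = n₀/n. -/

import Mathlib

/-!
Write `R` for the number of rejections and `Rⱼ` for the number of rejections after the
`p`-value `pⱼ` has been replaced by `0`, so that `1 ≤ Rⱼ`. If `pⱼ ≤ α_{Rⱼ}`, the replacement
changes no count `#{k : p_k ≤ α_{Rⱼ}}`, hence `R = Rⱼ`; conversely `pⱼ ≤ α_{max R 1}` forces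
`R ≥ 1` and `α_R ≤ α_{Rⱼ}`. Thus `V / γ(R) = n⁻¹ ∑_{j true} 1{pⱼ ≤ α_{Rⱼ}} / α_{Rⱼ}`.
For a true `j`, `Rⱼ` is a function of the other `p`-values, hence independent of the uniform `pⱼ`,
and each summand has expectation `1/n`.
-/

open MeasureTheory ProbabilityTheory Finset
open scoped Classical

/-- Number of rejections `R` of the step-up test with critical values `αc 1 ≤ … ≤ αc n`:
`R = max{i ∈ {1,…,n} : p_{i:n} ≤ αc i} = max{i : #{j : p_j ≤ αc i} ≥ i}` (`0` if empty). -/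
noncomputable def numRej {Ω ι : Type*} [Fintype ι] (n : ℕ) (αc : ℕ → ℝ)
    (q : ι → Ω → ℝ) (ω : Ω) : ℕ :=
  ((Finset.Icc 1 n).filter fun i =>
    i ≤ (Finset.univ.filter fun j => q j ω ≤ αc i).card).sup id

/-- Number `V` of falsely rejected true hypotheses: true `p`-values `≤ αc (max R 1)`
(with the convention `α_{0:n} = α_{1:n}`). -/
noncomputable def numFalseRej {Ω ι : Type*} [Fintype ι] (n : ℕ) (αc : ℕ → ℝ)
    (q : ι → Ω → ℝ) (T : Finset ι) (ω : Ω) : ℕ :=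
  (T.filter fun j => q j ω ≤ αc (max (numRej n αc q ω) 1)).card

theorem Finset.measurable_sup {Ω α ι : Type*} [MeasurableSpace Ω] [MeasurableSpace α]
    [SemilatticeSup α] [OrderBot α] [MeasurableSup₂ α] (s : Finset ι) {f : ι → Ω → α}
    (hf : ∀ i ∈ s, Measurable (f i)) : Measurable (s.sup f) :=
  Finset.sup_induction measurable_const (fun _ h₁ _ h₂ => h₁.sup h₂) hf

section Independence

variable {Ω ι : Type*} {mΩ : MeasurableSpace Ω} {μ : Measure Ω} [IsProbabilityMeasure μ]

lemma indep_sup_right_of_indep_of_indep_sup {A B C : MeasurableSpace Ω} (hA : A ≤ mΩ)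
    (hB : B ≤ mΩ) (hC : C ≤ mΩ) (hAB : Indep A B μ) (hABC : Indep (A ⊔ B) C μ) :
    Indep A (B ⊔ C) μ := by
  rw [Indep_iff] at hAB hABC
  let p : Set (Set Ω) := Set.image2 (· ∩ ·) {b | MeasurableSet[B] b} {c | MeasurableSet[C] c}
  have hp : IsPiSystem p := by
    rintro _ ⟨b₁, hb₁, c₁, hc₁, rfl⟩ _ ⟨b₂, hb₂, c₂, hc₂, rfl⟩ _
    exact ⟨b₁ ∩ b₂, hb₁.inter hb₂, c₁ ∩ c₂, hc₁.inter hc₂, Set.inter_inter_inter_comm _ _ _ _⟩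
  have hgen : B ⊔ C = MeasurableSpace.generateFrom p := by
    refine le_antisymm (sup_le (fun b hb => ?_) (fun c hc => ?_)) ?_
    · exact MeasurableSpace.measurableSet_generateFrom
        ⟨b, hb, Set.univ, MeasurableSet.univ, Set.inter_univ b⟩
    · exact MeasurableSpace.measurableSet_generateFrom
        ⟨Set.univ, MeasurableSet.univ, c, hc, Set.univ_inter c⟩
    · refine MeasurableSpace.generateFrom_le ?_
      rintro _ ⟨b, hb, c, hc, rfl⟩
      exact (le_sup_left (b := C) _ hb).inter (le_sup_right (a := B) _ hc)
  refine IndepSets.indep hA (sup_le hB hC) (@MeasurableSpace.isPiSystem_measurableSet Ω A) hp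
    (@MeasurableSpace.generateFrom_measurableSet Ω A).symm hgen ?_
  rw [IndepSets_iff]
  -- on `b ∩ c` both sides factor as `μ a * μ b * μ c`
  rintro a _ ha ⟨b, hb, c, hc, rfl⟩
  have hAB_meas : MeasurableSet[A ⊔ B] (a ∩ b) :=
    (le_sup_left (b := B) _ ha).inter (le_sup_right (a := A) _ hb)
  rw [← Set.inter_assoc, hABC _ _ hAB_meas hc, hAB a b ha hb, mul_assoc,
    hABC b c (le_sup_right (a := A) _ hb) hc]

lemma indep_iSup_compl_singleton {m : ι → MeasurableSpace Ω} (hm : ∀ i, m i ≤ mΩ)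
    {p : ι → Prop} (hiid : iIndep (fun i : {i // p i} => m i) μ)
    (hindep : Indep (⨆ i : {i // p i}, m i) (⨆ i : {i // ¬ p i}, m i) μ) {j : ι} (hj : p j) :
    Indep (m j) (⨆ k ∈ ({j}ᶜ : Set ι), m k) μ := by
  let j' : {i // p i} := ⟨j, hj⟩
  have hfam : Indep (m j) (⨆ i ∈ ({j'}ᶜ : Set {i // p i}), m i) μ :=
    indep_of_indep_of_le_left
      (indep_iSup_of_disjoint (m := fun i : {i // p i} => m i) (fun i => hm i) hiid
        (disjoint_compl_right (a := ({j'} : Set {i // p i}))))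
      (le_biSup (fun i : {i // p i} => m i) (Set.mem_singleton j'))
  have hrest : Indep (m j ⊔ ⨆ i ∈ ({j'}ᶜ : Set {i // p i}), m i) (⨆ i : {i // ¬ p i}, m i) μ :=
    indep_of_indep_of_le_left hindep
      (sup_le (le_iSup (fun i : {i // p i} => m i) j')
        (iSup₂_le fun i _ => le_iSup (fun i : {i // p i} => m i) i))
  have hjoint := indep_sup_right_of_indep_of_indep_sup (hm j)
    (iSup₂_le fun (i : {i // p i}) _ => hm i) (iSup_le fun (i : {i // ¬ p i}) => hm i) hfam hrest
  refine indep_of_indep_of_le_right hjoint (iSup₂_le fun k hk => ?_)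
  by_cases hk' : p k
  · refine le_sup_of_le_left (le_biSup (fun i : {i // p i} => m i) (i := ⟨k, hk'⟩) ?_)
    simpa [Subtype.ext_iff, j'] using hk
  · exact le_sup_of_le_right (le_iSup (fun i : {i // ¬ p i} => m i) ⟨k, hk'⟩)

end Independence

lemma ite_le_inv_eq_sum_indicator {Ω κ : Type*} {X : Ω → ℝ} {Y : Ω → κ} {a : κ → ℝ}
    {s : Finset κ} {ω : Ω} (hω : Y ω ∈ s) :
    (if X ω ≤ a (Y ω) then (a (Y ω))⁻¹ else 0) =
      ∑ r ∈ s, (X ⁻¹' Set.Iic (a r) ∩ Y ⁻¹' {r}).indicator (fun _ => (a r)⁻¹) ω := by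
  rw [Finset.sum_eq_single_of_mem _ hω]
  · simp [Set.indicator_apply]
  · intro r _ hr
    exact Set.indicator_of_notMem (fun h => hr h.2.symm) _

section Uniform

variable {Ω κ : Type*} [MeasurableSpace Ω] {μ : Measure Ω}

lemma measure_preimage_Iic_of_map_eq_uniform {X : Ω → ℝ} (hX : Measurable X)
    (hunif : μ.map X = volume.restrict (Set.Ioo 0 1)) {a : ℝ} (ha : a < 1) :
    μ (X ⁻¹' Set.Iic a) = ENNReal.ofReal a := by
  have hIoc : Set.Iic a ∩ Set.Ioo 0 1 = Set.Ioc 0 a := by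
    ext x
    simp only [Set.mem_inter_iff, Set.mem_Iic, Set.mem_Ioo, Set.mem_Ioc]
    constructor
    · rintro ⟨hxa, hx0, -⟩
      exact ⟨hx0, hxa⟩
    · rintro ⟨hx0, hxa⟩
      exact ⟨hxa, hx0, hxa.trans_lt ha⟩
  rw [← Measure.map_apply hX measurableSet_Iic, hunif,
    Measure.restrict_apply measurableSet_Iic, hIoc, Real.volume_Ioc, sub_zero]

variable [MeasurableSpace κ] [MeasurableSingletonClass κ]
  {X : Ω → ℝ} {Y : Ω → κ} {a : κ → ℝ} {s : Finset κ}

lemma integrable_ite_le_inv [IsFiniteMeasure μ] (hX : Measurable X) (hY : Measurable Y)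
    (hYs : ∀ ω, Y ω ∈ s) :
    Integrable (fun ω => if X ω ≤ a (Y ω) then (a (Y ω))⁻¹ else 0) μ := by
  simp_rw [ite_le_inv_eq_sum_indicator (hYs _)]
  exact integrable_finsetSum _ fun r _ => (integrable_const _).indicator
    ((hX measurableSet_Iic).inter (hY (measurableSet_singleton r)))

/-- Conditionally on `Y = r`, the event `X ≤ a r` has probability `a r`. -/
lemma integral_ite_le_inv_eq_one [IsProbabilityMeasure μ] (hX : Measurable X) (hY : Measurable Y)
    (hXY : IndepFun X Y μ) (hunif : μ.map X = volume.restrict (Set.Ioo 0 1))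
    (hYs : ∀ ω, Y ω ∈ s) (ha : ∀ r ∈ s, 0 < a r ∧ a r < 1) :
    ∫ ω, (if X ω ≤ a (Y ω) then (a (Y ω))⁻¹ else 0) ∂μ = 1 := by
  have hmeas (r : κ) : MeasurableSet (X ⁻¹' Set.Iic (a r) ∩ Y ⁻¹' {r}) :=
    (hX measurableSet_Iic).inter (hY (measurableSet_singleton r))
  have hterm : ∀ r ∈ s,
      μ.real (X ⁻¹' Set.Iic (a r) ∩ Y ⁻¹' {r}) • (a r)⁻¹ = μ.real (Y ⁻¹' {r}) := by
    intro r hr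
    rw [measureReal_def, hXY.measure_inter_preimage_eq_mul _ _ measurableSet_Iic
      (measurableSet_singleton r), measure_preimage_Iic_of_map_eq_uniform hX hunif (ha r hr).2,
      ENNReal.toReal_mul, ENNReal.toReal_ofReal (ha r hr).1.le, smul_eq_mul, ← measureReal_def,
      mul_comm, inv_mul_cancel_left₀ (ha r hr).1.ne']
  simp_rw [ite_le_inv_eq_sum_indicator (hYs _)]
  rw [integral_finsetSum _ fun r _ => (integrable_const _).indicator (hmeas r),
    Finset.sum_congr rfl fun r _ => integral_indicator_const _ (hmeas r),
    Finset.sum_congr rfl hterm,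
    sum_measureReal_preimage_singleton _ fun r _ => hY (measurableSet_singleton r),
    show Y ⁻¹' s = Set.univ from Set.eq_univ_of_forall hYs, probReal_univ]

end Uniform

section StepUp

variable {Ω ι : Type*} [Fintype ι] {n : ℕ} {αc : ℕ → ℝ} {q : ι → Ω → ℝ} {ω : Ω}

lemma numRej_le : numRej n αc q ω ≤ n :=
  Finset.sup_le fun _ hi => (Finset.mem_Icc.1 (Finset.mem_filter.1 hi).1).2

lemma le_numRej {i : ℕ} (hi : i ∈ Finset.Icc 1 n)
    (h : i ≤ (Finset.univ.filter fun j => q j ω ≤ αc i).card) : i ≤ numRej n αc q ω :=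
  Finset.le_sup (f := id) (Finset.mem_filter.2 ⟨hi, h⟩)

lemma numRej_mem_Icc_and_le_card (h : numRej n αc q ω ≠ 0) :
    numRej n αc q ω ∈ Finset.Icc 1 n ∧
      numRej n αc q ω ≤ (Finset.univ.filter fun j => q j ω ≤ αc (numRej n αc q ω)).card := by
  have hne : ((Finset.Icc 1 n).filter fun i =>
      i ≤ (Finset.univ.filter fun j => q j ω ≤ αc i).card).Nonempty := by
    by_contra hempty
    exact h (by simp [numRej, Finset.not_nonempty_iff_eq_empty.1 hempty])
  have hmem := Finset.sup_mem_of_nonempty (f := id) hne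
  rw [Set.image_id, Finset.mem_coe] at hmem
  exact Finset.mem_filter.1 hmem

lemma one_le_numRej_of_le (hn : 0 < n) {j : ι} (hj : q j ω ≤ αc 1) : 1 ≤ numRej n αc q ω :=
  le_numRej (Finset.mem_Icc.2 ⟨le_rfl, hn⟩)
    (Finset.card_pos.2 ⟨j, Finset.mem_filter.2 ⟨Finset.mem_univ _, hj⟩⟩)

variable [DecidableEq ι]

lemma card_filter_le_update_zero {a : ℝ} (ha : 0 ≤ a) (j : ι) :
    (Finset.univ.filter fun k => q k ω ≤ a).card ≤
      (Finset.univ.filter fun k => Function.update q j 0 k ω ≤ a).card := by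
  refine Finset.card_le_card fun k hk => Finset.mem_filter.2 ⟨Finset.mem_univ _, ?_⟩
  rcases eq_or_ne k j with rfl | hkj
  · simpa using ha
  · simpa [Function.update_of_ne hkj] using hk

lemma filter_update_zero_of_le {a : ℝ} (ha : 0 ≤ a) {j : ι} (hj : q j ω ≤ a) :
    (Finset.univ.filter fun k => Function.update q j 0 k ω ≤ a) =
      Finset.univ.filter fun k => q k ω ≤ a := by
  refine Finset.filter_congr fun k _ => ?_
  rcases eq_or_ne k j with rfl | hkj
  · simp [ha, hj]
  · rw [Function.update_of_ne hkj]

lemma one_le_numRej_update_zero (hn : 0 < n) (hpos : 0 < αc 1) (j : ι) :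
    1 ≤ numRej n αc (Function.update q j 0) ω :=
  one_le_numRej_of_le hn (j := j) (by simpa using hpos.le)

lemma αc_nonneg (hpos : 0 < αc 1)
    (hmono : ∀ i j, 1 ≤ i → i ≤ j → j ≤ n → αc i ≤ αc j) {i : ℕ} (hi : i ∈ Finset.Icc 1 n) :
    0 ≤ αc i :=
  hpos.le.trans (hmono 1 i le_rfl (Finset.mem_Icc.1 hi).1 (Finset.mem_Icc.1 hi).2)

lemma numRej_le_numRej_update_zero (hpos : 0 < αc 1)
    (hmono : ∀ i j, 1 ≤ i → i ≤ j → j ≤ n → αc i ≤ αc j) (j : ι) :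
    numRej n αc q ω ≤ numRej n αc (Function.update q j 0) ω :=
  Finset.sup_le fun _ hi => le_numRej (Finset.mem_filter.1 hi).1 <|
    (Finset.mem_filter.1 hi).2.trans
      (card_filter_le_update_zero (αc_nonneg hpos hmono (Finset.mem_filter.1 hi).1) j)

lemma numRej_eq_of_le_αc_numRej_update_zero (hn : 0 < n) (hpos : 0 < αc 1)
    (hmono : ∀ i j, 1 ≤ i → i ≤ j → j ≤ n → αc i ≤ αc j) {j : ι}
    (hj : q j ω ≤ αc (numRej n αc (Function.update q j 0) ω)) :
    numRej n αc q ω = numRej n αc (Function.update q j 0) ω := by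
  obtain ⟨hmem, hcard⟩ := numRej_mem_Icc_and_le_card
    (Nat.one_le_iff_ne_zero.1 (one_le_numRej_update_zero (q := q) (ω := ω) hn hpos j))
  rw [filter_update_zero_of_le (αc_nonneg hpos hmono hmem) hj] at hcard
  exact le_antisymm (numRej_le_numRej_update_zero hpos hmono j) (le_numRej hmem hcard)

lemma le_αc_numRej_update_zero (hn : 0 < n) (hpos : 0 < αc 1)
    (hmono : ∀ i j, 1 ≤ i → i ≤ j → j ≤ n → αc i ≤ αc j) {j : ι}
    (hj : q j ω ≤ αc (max (numRej n αc q ω) 1)) :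
    q j ω ≤ αc (numRej n αc (Function.update q j 0) ω) := by
  have hR : 1 ≤ numRej n αc q ω := by
    by_contra hR
    rw [max_eq_right (by omega)] at hj
    exact hR (one_le_numRej_of_le hn hj)
  rw [max_eq_left hR] at hj
  exact hj.trans (hmono _ _ hR (numRej_le_numRej_update_zero hpos hmono j) numRej_le)

lemma ite_le_αc_max_numRej_eq (hn : 0 < n) (hpos : 0 < αc 1)
    (hmono : ∀ i j, 1 ≤ i → i ≤ j → j ≤ n → αc i ≤ αc j) (j : ι) :
    (if q j ω ≤ αc (max (numRej n αc q ω) 1) then (αc (max (numRej n αc q ω) 1))⁻¹ else 0) =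
      if q j ω ≤ αc (numRej n αc (Function.update q j 0) ω)
      then (αc (numRej n αc (Function.update q j 0) ω))⁻¹ else 0 := by
  by_cases hj : q j ω ≤ αc (numRej n αc (Function.update q j 0) ω)
  · rw [numRej_eq_of_le_αc_numRej_update_zero hn hpos hmono hj,
      max_eq_left (one_le_numRej_update_zero hn hpos j)]
  · rw [if_neg hj, if_neg (mt (le_αc_numRej_update_zero hn hpos hmono) hj)]

lemma numFalseRej_div_eq_sum (hn : 0 < n) (hpos : 0 < αc 1)
    (hmono : ∀ i j, 1 ≤ i → i ≤ j → j ≤ n → αc i ≤ αc j) (T : Finset ι) :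
    (numFalseRej n αc q T ω : ℝ) / αc (max (numRej n αc q ω) 1) =
      ∑ j ∈ T, if q j ω ≤ αc (numRej n αc (Function.update q j 0) ω)
        then (αc (numRej n αc (Function.update q j 0) ω))⁻¹ else 0 := by
  simp only [numFalseRej, Finset.card_filter, Nat.cast_sum, div_eq_mul_inv, Finset.sum_mul]
  refine Finset.sum_congr rfl fun j _ => ?_
  rw [← ite_le_αc_max_numRej_eq hn hpos hmono]
  split_ifs <;> simp

end StepUp

lemma measurable_numRej {Ω ι : Type*} [Fintype ι] {m : MeasurableSpace Ω} (n : ℕ) (αc : ℕ → ℝ)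
    {q : ι → Ω → ℝ} (hq : ∀ j, Measurable (q j)) : Measurable (numRej n αc q) := by
  have hcard (i : ℕ) : Measurable fun ω => (Finset.univ.filter fun j => q j ω ≤ αc i).card := by
    simp only [Finset.card_filter]
    exact Finset.measurable_sum _ fun j _ =>
      Measurable.ite (hq j measurableSet_Iic) measurable_const measurable_const
  have hsup : numRej n αc q = (Finset.Icc 1 n).sup fun i ω =>
      if i ≤ (Finset.univ.filter fun j => q j ω ≤ αc i).card then i else 0 := by
    ext ω
    simp only [numRej, Finset.sup_apply, sup_ite, Finset.sup_le_iff, zero_le, implies_true,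
      sup_of_le_left]
    rfl
  rw [hsup]
  exact Finset.measurable_sup _ fun i _ =>
    Measurable.ite (hcard i .of_discrete) measurable_const measurable_const

lemma measurable_update_zero {Ω ι : Type*} [DecidableEq ι] {m : MeasurableSpace Ω}
    {q : ι → Ω → ℝ} {j : ι} (hq : ∀ k ≠ j, Measurable (q k)) (k : ι) :
    Measurable (Function.update q j 0 k) := by
  rcases eq_or_ne k j with rfl | hkj
  · simpa using measurable_zero
  · simpa [Function.update_of_ne hkj] using hq k hkj

lemma indepFun_numRej_update_zero {Ω ι : Type*} [Fintype ι] [DecidableEq ι]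
    {mΩ : MeasurableSpace Ω} {μ : Measure Ω} [IsProbabilityMeasure μ] (n : ℕ) (αc : ℕ → ℝ)
    {q : ι → Ω → ℝ} (hq : ∀ j, Measurable (q j)) {T : Finset ι}
    (hiid : iIndepFun (fun i : {j // j ∈ T} => q i) μ)
    (hindep : IndepFun (fun ω (i : {j // j ∈ T}) => q i ω) (fun ω (j : {j // j ∉ T}) => q j ω) μ)
    {j : ι} (hj : j ∈ T) :
    IndepFun (q j) (numRej n αc (Function.update q j 0)) μ := by
  rw [IndepFun_iff_Indep, MeasurableSpace.comap_process_pi,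
    MeasurableSpace.comap_process_pi] at hindep
  have hsep := indep_iSup_compl_singleton (fun k => (hq k).comap_le)
    ((iIndepFun_iff_iIndep _ _ _).1 hiid) hindep hj
  rw [IndepFun_iff_Indep]
  refine indep_of_indep_of_le_right hsep (Measurable.comap_le ?_)
  refine measurable_numRej n αc (measurable_update_zero (fun k hk => ?_))
  exact Measurable.of_comap_le (le_biSup (fun k => MeasurableSpace.comap (q k) _) hk)

theorem expectation_V_div_gamma_general
    {Ω : Type} [MeasurableSpace Ω] (μ : Measure Ω) [IsProbabilityMeasure μ]
    (n n₀ : ℕ) (hn : 0 < n)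
    (q : Fin n → Ω → ℝ) (hq : ∀ j, Measurable (q j))
    (T : Finset (Fin n)) (hT : T.card = n₀)
    (αc : ℕ → ℝ) (hpos : 0 < αc 1) (hlt : αc n < 1)
    (hmono : ∀ i j, 1 ≤ i → i ≤ j → j ≤ n → αc i ≤ αc j)
    (hunif : ∀ i ∈ T, μ.map (q i) = volume.restrict (Set.Ioo 0 1))
    (hiid : iIndepFun
      (fun i : {j : Fin n // j ∈ T} => q i) μ)
    (hindep : IndepFun (fun ω (i : {j : Fin n // j ∈ T}) => q i ω)
      (fun ω (j : {j : Fin n // j ∉ T}) => q j ω) μ) :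
    ∫ ω, (numFalseRej n αc q T ω : ℝ) / ((n : ℝ) * αc (max (numRej n αc q ω) 1)) ∂μ
      = (n₀ : ℝ) / n := by
  have hα : ∀ r ∈ Finset.Icc 1 n, 0 < αc r ∧ αc r < 1 := by
    intro r hr
    obtain ⟨h1r, hrn⟩ := Finset.mem_Icc.1 hr
    exact ⟨hpos.trans_le (hmono 1 r le_rfl h1r hrn), (hmono r n h1r hrn le_rfl).trans_lt hlt⟩
  have hR (j : Fin n) (ω : Ω) : numRej n αc (Function.update q j 0) ω ∈ Finset.Icc 1 n :=
    Finset.mem_Icc.2 ⟨one_le_numRej_update_zero hn hpos j, numRej_le⟩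
  have hRmeas (j : Fin n) : Measurable (numRej n αc (Function.update q j 0)) :=
    measurable_numRej n αc (measurable_update_zero fun k _ => hq k)
  calc ∫ ω, (numFalseRej n αc q T ω : ℝ) / ((n : ℝ) * αc (max (numRej n αc q ω) 1)) ∂μ
      = (∑ j ∈ T, ∫ ω, (if q j ω ≤ αc (numRej n αc (Function.update q j 0) ω)
          then (αc (numRej n αc (Function.update q j 0) ω))⁻¹ else 0) ∂μ) / n := by
        simp_rw [div_mul_eq_div_div_swap, numFalseRej_div_eq_sum hn hpos hmono]
        rw [integral_div,
          integral_finsetSum _ fun j _ => integrable_ite_le_inv (hq j) (hRmeas j) (hR j)]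
    _ = ∑ j ∈ T, (1 : ℝ) / n := by
        rw [Finset.sum_div]
        refine Finset.sum_congr rfl fun j hj => ?_
        rw [integral_ite_le_inv_eq_one (hq j) (hRmeas j)
          (indepFun_numRej_update_zero n αc hq hiid hindep hj) (hunif j hj) (hR j) hα]
    _ = n₀ / n := by rw [Finset.sum_const, hT, nsmul_eq_mul, mul_one_div]

/-- Key identity for the BI model: with `γ(i) = n·α_{i:n}` (and `γ(0) = n·α_{1:n}`),
the step-up test satisfies `E(V/γ(R)) = n₀/n`. -/
theorem expectation_V_div_gamma
    {Ω : Type} [MeasurableSpace Ω] (μ : Measure Ω) [IsProbabilityMeasure μ]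
    (n n₀ : ℕ) (hn : 0 < n) (hn₀ : n₀ ≤ n)
    (q : Fin n → Ω → ℝ) (hq : ∀ j, Measurable (q j))
    (T : Finset (Fin n)) (hT : T.card = n₀)
    (αc : ℕ → ℝ) (hpos : 0 < αc 1) (hlt : αc n < 1)
    (hmono : ∀ i j, 1 ≤ i → i ≤ j → j ≤ n → αc i ≤ αc j)
    (hunif : ∀ i ∈ T, μ.map (q i) = volume.restrict (Set.Ioo 0 1))
    (hiid : iIndepFun
      (fun i : {j : Fin n // j ∈ T} => q i) μ)
    (hindep : IndepFun (fun ω (i : {j : Fin n // j ∈ T}) => q i ω)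
      (fun ω (j : {j : Fin n // j ∉ T}) => q j ω) μ) :
    ∫ ω, (numFalseRej n αc q T ω : ℝ) / ((n : ℝ) * αc (max (numRej n αc q ω) 1)) ∂μ
      = (n₀ : ℝ) / n :=
  expectation_V_div_gamma_general μ n n₀ hn q hq T hT αc hpos hlt hmono hunif hiid hindep
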